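/- There exists a constant c₅ > 0 such that |f(x,u)|² ≤ c₅ · u·f(x,u) for all x ∈ ℝ³ and all u with 0 < |u| ≤ 1. -/

import Mathlib

/-!
By (f2') with `ε = 1`, `|f(x,u)| ≤ |u|` for `|u| ≤ δ`; by (f1), `|f(x,u)| ≤ 2c ≤ (2c/δ)|u|` for
`δ < |u| ≤ 1`. Hence `|f(x,u)| ≤ C|u|` on the unit ball, and since `u f(x,u) > 0` by (f3),
`|f(x,u)|² ≤ C |u| |f(x,u)| = C u f(x,u)`.
-/

lemma abs_le_max_mul_abs {y u ε δ M : ℝ} (hδ : 0 < δ) (hsmall : |u| ≤ δ → |y| ≤ ε * |u|)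
    (hbdd : |y| ≤ M) : |y| ≤ max ε (M / δ) * |u| := by
  rcases le_or_gt |u| δ with hu | hu
  · exact (hsmall hu).trans (mul_le_mul_of_nonneg_right (le_max_left _ _) (abs_nonneg u))
  · have hM : 0 ≤ M / δ := div_nonneg ((abs_nonneg y).trans hbdd) hδ.le
    calc |y| ≤ M / δ * δ := by rwa [div_mul_cancel₀ M hδ.ne']
      _ ≤ M / δ * |u| := mul_le_mul_of_nonneg_left hu.le hM
      _ ≤ max ε (M / δ) * |u| := mul_le_mul_of_nonneg_right (le_max_right _ _) (abs_nonneg u)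

lemma sq_abs_le_mul_of_abs_le_mul_abs {y u K : ℝ} (h : |y| ≤ K * |u|) (huy : 0 ≤ u * y) :
    |y| ^ 2 ≤ K * (u * y) :=
  calc |y| ^ 2 = |y| * |y| := sq _
    _ ≤ K * |u| * |y| := mul_le_mul_of_nonneg_right h (abs_nonneg y)
    _ = K * (u * y) := by rw [mul_assoc, ← abs_mul, abs_of_nonneg huy]

lemma mul_one_add_abs_rpow_le_two_mul {c p u : ℝ} (hc : 0 ≤ c) (hp : 1 ≤ p) (hu : |u| ≤ 1) :
    c * (1 + |u| ^ (p - 1)) ≤ 2 * c := by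
  have : |u| ^ (p - 1) ≤ 1 := Real.rpow_le_one (abs_nonneg u) hu (by linarith)
  nlinarith

theorem stmt_5_general
    (f : EuclideanSpace ℝ (Fin 3) → ℝ → ℝ)
    (F : EuclideanSpace ℝ (Fin 3) → ℝ → ℝ)
    (p : ℝ) (hp : 2 < p)
    (c : ℝ) (hc : 0 < c)
    (hf1 : ∀ x u, |f x u| ≤ c * (1 + |u| ^ (p - 1)))
    (hf2 : ∀ ε > (0 : ℝ), ∃ δ > (0 : ℝ), ∀ x u, |u| ≤ δ → |f x u| ≤ ε * |u|)
    (a₀ b₀ α : ℝ)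
    (hf3 : ∀ x u, u ≠ 0 →
      0 < (4 + 1 / (a₀ * |u| ^ α + b₀)) * F x u ∧
      (4 + 1 / (a₀ * |u| ^ α + b₀)) * F x u ≤ u * f x u) :
    ∃ c₅ > (0 : ℝ), ∀ x u, 0 < |u| → |u| ≤ 1 → |f x u| ^ 2 ≤ c₅ * (u * f x u) := by
  obtain ⟨δ, hδ, hsmall⟩ := hf2 1 one_pos
  refine ⟨max 1 (2 * c / δ), lt_max_of_lt_left one_pos, fun x u hu0 hu1 => ?_⟩
  have hu : u ≠ 0 := abs_pos.mp hu0
  have huf : 0 < u * f x u := (hf3 x u hu).1.trans_le (hf3 x u hu).2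
  have hbdd : |f x u| ≤ 2 * c :=
    (hf1 x u).trans (mul_one_add_abs_rpow_le_two_mul hc.le (by linarith) hu1)
  exact sq_abs_le_mul_of_abs_le_mul_abs (abs_le_max_mul_abs hδ (hsmall x u) hbdd) huf.le

/-- Under (f1), (f2') and (f3), there exists `c₅ > 0` such that
`|f(x,u)|² ≤ c₅·u·f(x,u)` for all `x ∈ ℝ³` and all `u` with `0 < |u| ≤ 1`. -/
theorem stmt_5
    (f : EuclideanSpace ℝ (Fin 3) → ℝ → ℝ)
    (hf : Continuous fun q : EuclideanSpace ℝ (Fin 3) × ℝ => f q.1 q.2)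
    (F : EuclideanSpace ℝ (Fin 3) → ℝ → ℝ)
    (hF : ∀ x u, F x u = ∫ s in (0 : ℝ)..u, f x s)
    (p : ℝ) (hp : 2 < p) (hp6 : p < 6)
    (c : ℝ) (hc : 0 < c)
    (hf1 : ∀ x u, |f x u| ≤ c * (1 + |u| ^ (p - 1)))
    (hf2 : ∀ ε > (0 : ℝ), ∃ δ > (0 : ℝ), ∀ x u, |u| ≤ δ → |f x u| ≤ ε * |u|)
    (a₀ b₀ α : ℝ) (ha₀ : 0 < a₀) (hb₀ : 0 < b₀) (hα : 0 < α)
    (hf3 : ∀ x u, u ≠ 0 →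
      0 < (4 + 1 / (a₀ * |u| ^ α + b₀)) * F x u ∧
      (4 + 1 / (a₀ * |u| ^ α + b₀)) * F x u ≤ u * f x u) :
    ∃ c₅ > (0 : ℝ), ∀ x u, 0 < |u| → |u| ≤ 1 → |f x u| ^ 2 ≤ c₅ * (u * f x u) :=
  stmt_5_general f F p hp c hc hf1 hf2 a₀ b₀ α hf3
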